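/- arXiv:math/0603403 — 11 statements merged into one kernel-verified Lean document; each statement's English description precedes it below -/
import Mathlib

section
/- If (a_n) is a log-balanced sequence of positive reals with a_0 = 1, then for all n, m ≥ 0: a_n · a_m ≤ a_{n+m} ≤ C(n+m, n) · a_n · a_m, where C(n+m,n) is the binomial coefficient. -/
theorem log_balanced_binomial_ineq (a : ℕ → ℝ)
    (hpos : ∀ n, 0 < a n) (h0 : a 0 = 1)
    (hconv : ∀ n ≥ 1, (a n) ^ 2 ≤ a (n - 1) * a (n + 1))
    (hconc : ∀ n ≥ 1,
      (a (n - 1) / (Nat.factorial (n - 1) : ℝ)) * (a (n + 1) / (Nat.factorial (n + 1) : ℝ)) ≤ (a n / (Nat.factorial n : ℝ)) ^ 2) :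
    ∀ n m : ℕ, a n * a m ≤ a (n + m) ∧
      a (n + m) ≤ ((n + m).choose n : ℝ) * a n * a m := by
  have hstep : ∀ j, a (j + 1) ^ 2 ≤ a j * a (j + 2) := by
    intro j
    have := hconv (j + 1) (by omega)
    simpa using this
  have hmono : Monotone fun j => a (j + 1) / a j := by
    apply monotone_nat_of_le_succ
    intro j
    rw [div_le_div_iff₀ (hpos j) (hpos (j + 1))]
    nlinarith [hstep j, hpos j, hpos (j + 1), hpos (j + 2)]
  have cross : ∀ i j, i ≤ j → a (i + 1) * a j ≤ a i * a (j + 1) := by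
    intro i j hij
    have h := hmono hij
    rw [div_le_div_iff₀ (hpos i) (hpos j)] at h
    linarith
  have low : ∀ n m, n ≤ m → a n * a m ≤ a (n + m) := by
    intro n
    induction n with
    | zero => intro m _; simp [h0]
    | succ k ih =>
      intro m hm
      calc a (k + 1) * a m ≤ a k * a (m + 1) := cross k m (by omega)
        _ ≤ a (k + (m + 1)) := ih (m + 1) (by omega)
        _ = a (k + 1 + m) := by rw [show k + (m + 1) = k + 1 + m by omega]
  set b : ℕ → ℝ := fun n => a n / n.factorial with hb
  have bpos : ∀ n, 0 < b n := fun n =>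
    div_pos (hpos n) (by exact_mod_cast n.factorial_pos)
  have hstep' : ∀ j, b j * b (j + 2) ≤ b (j + 1) ^ 2 := by
    intro j
    have := hconc (j + 1) (by omega)
    simpa [hb] using this
  have hanti : Antitone fun j => b (j + 1) / b j := by
    apply antitone_nat_of_succ_le
    intro j
    rw [div_le_div_iff₀ (bpos (j + 1)) (bpos j)]
    nlinarith [hstep' j, bpos j, bpos (j + 1), bpos (j + 2)]
  have cross' : ∀ i j, i ≤ j → b i * b (j + 1) ≤ b (i + 1) * b j := by
    intro i j hij
    have h := hanti hij
    rw [div_le_div_iff₀ (bpos j) (bpos i)] at h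
    linarith
  have high : ∀ n m, n ≤ m → b (n + m) ≤ b n * b m := by
    intro n
    induction n with
    | zero => intro m _; simp [hb, h0]
    | succ k ih =>
      intro m hm
      calc b (k + 1 + m) = b (k + (m + 1)) := by rw [show k + (m + 1) = k + 1 + m by omega]
        _ ≤ b k * b (m + 1) := ih (m + 1) (by omega)
        _ ≤ b (k + 1) * b m := cross' k m (by omega)
  intro n m
  have hlow : a n * a m ≤ a (n + m) := by
    rcases le_total n m with h | h
    · exact low n m h
    · rw [mul_comm, show n + m = m + n by omega]
      exact low m n h
  have hhigh : b (n + m) ≤ b n * b m := by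
    rcases le_total n m with h | h
    · exact high n m h
    · rw [mul_comm, show n + m = m + n by omega]
      exact high m n h
  refine ⟨hlow, ?_⟩
  have fn : (0 : ℝ) < n.factorial := by exact_mod_cast n.factorial_pos
  have fm : (0 : ℝ) < m.factorial := by exact_mod_cast m.factorial_pos
  have fnm : (0 : ℝ) < (n + m).factorial := by exact_mod_cast (n + m).factorial_pos
  have hfac : ((n + m).choose n : ℝ) * n.factorial * m.factorial = (n + m).factorial := by
    have := Nat.choose_mul_factorial_mul_factorial (Nat.le_add_right n m)
    rw [Nat.add_sub_cancel_left] at this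
    exact_mod_cast this
  simp only [hb] at hhigh
  rw [div_mul_div_comm, div_le_div_iff₀ fnm (mul_pos fn fm)] at hhigh
  rw [← hfac] at hhigh
  nlinarith [mul_pos fn fm, hhigh]
end

section
/- Let (a_n)_{n≥0} be a sequence of positive reals satisfying a_n = R(n) a_{n-1} + S(n) a_{n-2} for n ≥ 2, with quotient sequence x_n = a_n/a_{n-1}. Suppose there exists n_0 ≥ 1 such that x_{n_0} ≤ x_{n_0+1}, and for all n ≥ n_0 + 1: R(n) ≥ 0, S(n) ≤ 0, and (R(n+1) − R(n)) x_{n-1} + (S(n+1) − S(n)) ≥ 0. Then the sequence (x_n)_{n ≥ n_0} is non-decreasing, i.e. (a_n)_{n ≥ n_0} is log-convex. -/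
theorem log_convex_sufficient_S_nonpos (a : ℕ → ℝ) (R S : ℕ → ℝ) (n₀ : ℕ)
    (hpos : ∀ n, 0 < a n)
    (hrec : ∀ n ≥ 2, a n = R n * a (n - 1) + S n * a (n - 2))
    (hn₀ : 1 ≤ n₀)
    (hstart : a n₀ / a (n₀ - 1) ≤ a (n₀ + 1) / a n₀)
    (hR : ∀ n ≥ n₀ + 1, 0 ≤ R n)
    (hS : ∀ n ≥ n₀ + 1, S n ≤ 0)
    (hcond : ∀ n ≥ n₀ + 1,
      (R (n + 1) - R n) * (a (n - 1) / a (n - 2)) + (S (n + 1) - S n) ≥ 0) :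
    ∀ n ≥ n₀, a n / a (n - 1) ≤ a (n + 1) / a n := by
  intro n hn
  induction n, hn using Nat.le_induction with
  | base => exact hstart
  | succ n hn ih =>
    have h1 : 1 ≤ n := le_trans hn₀ hn
    have e1 : n + 1 - 1 = n := by omega
    have e2 : n + 1 - 2 = n - 1 := by omega
    have e3 : n + 1 + 1 - 1 = n + 1 := by omega
    have e4 : n + 1 + 1 - 2 = n := by omega
    have hr1 := hrec (n + 1) (by omega)
    have hr2 := hrec (n + 1 + 1) (by omega)
    rw [e1, e2] at hr1
    rw [e3, e4] at hr2
    have hc := hcond (n + 1) (by omega)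
    rw [e1, e2] at hc
    have hS2 := hS (n + 1 + 1) (by omega)
    have pa := hpos (n - 1)
    have pb := hpos n
    have pc := hpos (n + 1)
    have hx : a n * a n ≤ a (n + 1) * a (n - 1) := by
      have := (div_le_div_iff₀ pa pb).mp ih
      nlinarith
    have hc' : 0 ≤ (R (n + 1 + 1) - R (n + 1)) * a n + (S (n + 1 + 1) - S (n + 1)) * a (n - 1) := by
      have h := mul_le_mul_of_nonneg_right hc (le_of_lt pa)
      rw [zero_mul] at h
      have hdm : a n / a (n - 1) * a (n - 1) = a n := div_mul_cancel₀ _ (ne_of_gt pa)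
      rw [add_mul, mul_assoc, hdm] at h
      linarith
    rw [e1]
    rw [div_le_div_iff₀ pb pc]
    nlinarith [mul_le_mul_of_nonneg_right hc' (le_of_lt pc), mul_nonneg (neg_nonneg.mpr hS2) (sub_nonneg.mpr hx)]
end

section
/- Let (a_n)_{n≥0} be a log-convex sequence of positive reals satisfying a_n = R(n) a_{n-1} + S(n) a_{n-2} for n ≥ 2, with quotient sequence x_n = a_n/a_{n-1} non-decreasing. Suppose there exists n_0 ≥ 1 with x_{n_0+1} ≤ ((n_0+1)/n_0) x_{n_0}, and for all n ≥ n_0 + 1: R(n) ≥ 0, S(n) ≥ 0, and [ (n+1) R(n) − n R(n+1) ] x_{n-1} + [ (n+1) S(n) − n S(n+1) ] ≥ 0. Then x_{n+1} ≤ ((n+1)/n) x_n for all n ≥ n_0, i.e. (a_n)_{n≥n_0} is log-balanced. -/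
theorem log_balanced_sufficient_S_nonneg (a : ℕ → ℝ) (R S : ℕ → ℝ) (n₀ : ℕ)
    (hpos : ∀ n, 0 < a n)
    (hrec : ∀ n ≥ 2, a n = R n * a (n - 1) + S n * a (n - 2))
    (hconv : ∀ n ≥ 1, a n / a (n - 1) ≤ a (n + 1) / a n)
    (hn₀ : 1 ≤ n₀)
    (hstart : a (n₀ + 1) / a n₀ ≤ (((n₀ : ℝ) + 1) / n₀) * (a n₀ / a (n₀ - 1)))
    (hR : ∀ n ≥ n₀ + 1, 0 ≤ R n)
    (hS : ∀ n ≥ n₀ + 1, 0 ≤ S n)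
    (hcond : ∀ n ≥ n₀ + 1,
      (((n : ℝ) + 1) * R n - (n : ℝ) * R (n + 1)) * (a (n - 1) / a (n - 2)) +
        (((n : ℝ) + 1) * S n - (n : ℝ) * S (n + 1)) ≥ 0) :
    ∀ n ≥ n₀, a (n + 1) / a n ≤ (((n : ℝ) + 1) / n) * (a n / a (n - 1)) := by
  intro n hn
  induction n, hn using Nat.le_induction with
  | base => exact hstart
  | succ n hn _ =>
    have hn1 : 1 ≤ n := le_trans hn₀ hn
    have hA := hpos (n - 1)
    have hB := hpos n
    have hC := hpos (n + 1)
    have hD := hpos (n + 2)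
    have e1 : a (n + 2) = R (n + 2) * a (n + 1) + S (n + 2) * a n := by
      have h := hrec (n + 2) (by omega)
      simpa using h
    have e2 : a (n + 1) = R (n + 1) * a n + S (n + 1) * a (n - 1) := by
      have h := hrec (n + 1) (by omega)
      rwa [show n + 1 - 1 = n from rfl, show n + 1 - 2 = n - 1 by omega] at h
    have hmono : a n * a n ≤ a (n + 1) * a (n - 1) := by
      have h := hconv n hn1
      rw [div_le_div_iff₀ hA hB] at h
      linarith
    have hc := hcond (n + 1) (by omega)
    rw [show n + 1 - 1 = n from rfl, show n + 1 - 2 = n - 1 by omega] at hc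
    push_cast at hc
    have hS2 := hS (n + 2) (by omega)
    have hAne : a (n - 1) ≠ 0 := ne_of_gt hA
    have hc' : 0 ≤ (((n : ℝ) + 2) * R (n + 1) - ((n : ℝ) + 1) * R (n + 2)) * a n +
        (((n : ℝ) + 2) * S (n + 1) - ((n : ℝ) + 1) * S (n + 2)) * a (n - 1) := by
      calc (0 : ℝ)
          ≤ ((((n : ℝ) + 1 + 1) * R (n + 1) - ((n : ℝ) + 1) * R (n + 1 + 1)) * (a n / a (n - 1)) +
              (((n : ℝ) + 1 + 1) * S (n + 1) - ((n : ℝ) + 1) * S (n + 1 + 1))) * a (n - 1) :=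
            mul_nonneg hc hA.le
        _ = _ := by field_simp; ring
    rw [show n + 1 - 1 = n from rfl]
    push_cast
    rw [div_mul_div_comm, div_le_div_iff₀ hC (by positivity)]
    have h1 := mul_nonneg hc' hC.le
    have h2 := mul_le_mul_of_nonneg_left hmono
      (mul_nonneg (by positivity : (0:ℝ) ≤ (n : ℝ) + 1) hS2)
    have h3 : ((n : ℝ) + 1) * (a (n + 2) * a n) =
        ((n : ℝ) + 1) * (R (n + 2) * (a (n + 1) * a n)) +
          ((n : ℝ) + 1) * (S (n + 2) * (a n * a n)) := by
      rw [e1]; ring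
    have h4 : ((n : ℝ) + 2) * (a (n + 1) * a (n + 1)) =
        ((n : ℝ) + 2) * (R (n + 1) * (a n * a (n + 1))) +
          ((n : ℝ) + 2) * (S (n + 1) * (a (n - 1) * a (n + 1))) := by
      rw [e2]; ring
    have hgoal : ((n : ℝ) + 1) * (a (n + 2) * a n) ≤ ((n : ℝ) + 2) * (a (n + 1) * a (n + 1)) := by
      linarith [h1, h2, h3, h4]
    show a (n + 2) * (((n : ℝ) + 1) * a n) ≤ ((n : ℝ) + 1 + 1) * a (n + 1) * a (n + 1)
    linarith [hgoal]
end

section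
/- Let (a_n)_{n≥0} be a log-convex sequence of positive reals satisfying a_n = R(n) a_{n-1} + S(n) a_{n-2} for n ≥ 2, with R(n) ≥ 0 and S(n) ≤ 0, and quotient sequence x_n = a_n/a_{n-1} non-decreasing. Suppose there exists n_0 ≥ 1 with x_{n_0+1} ≤ ((n_0+1)/n_0) x_{n_0}, and for all n ≥ n_0 + 1: [ (n+1)R(n) − nR(n+1) ] x_{n-1} + [ (n+1)S(n) − (n−1)S(n+1) ] ≥ 0. Then x_{n+1} ≤ ((n+1)/n) x_n for all n ≥ n_0, so (a_n)_{n≥n_0} is log-balanced. -/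
theorem log_balanced_sufficient_S_nonpos (a : ℕ → ℝ) (R S : ℕ → ℝ) (n₀ : ℕ)
    (hpos : ∀ n, 0 < a n)
    (hrec : ∀ n ≥ 2, a n = R n * a (n - 1) + S n * a (n - 2))
    (hR : ∀ n, 0 ≤ R n) (hS : ∀ n, S n ≤ 0)
    (hconv : ∀ n ≥ 1, a n / a (n - 1) ≤ a (n + 1) / a n)
    (hn₀ : 1 ≤ n₀)
    (hstart : a (n₀ + 1) / a n₀ ≤ (((n₀ : ℝ) + 1) / n₀) * (a n₀ / a (n₀ - 1)))
    (hcond : ∀ n ≥ n₀ + 1,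
      (((n : ℝ) + 1) * R n - (n : ℝ) * R (n + 1)) * (a (n - 1) / a (n - 2)) +
        (((n : ℝ) + 1) * S n - ((n : ℝ) - 1) * S (n + 1)) ≥ 0) :
    ∀ n ≥ n₀, a (n + 1) / a n ≤ (((n : ℝ) + 1) / n) * (a n / a (n - 1)) := by
  intro n hn
  induction n, hn using Nat.le_induction with
  | base => exact hstart
  | succ m hm ih =>
    have hm1 : 1 ≤ m := le_trans hn₀ hm
    have hmpos : (0:ℝ) < (m:ℝ) := by exact_mod_cast hm1
    set xm := a m / a (m-1) with hxm_def
    set x1 := a (m+1) / a m with hx1_def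
    set x2 := a (m+2) / a (m+1) with hx2_def
    have hxm : 0 < xm := div_pos (hpos m) (hpos (m-1))
    have hx1 : 0 < x1 := div_pos (hpos _) (hpos _)
    have hx2 : 0 < x2 := div_pos (hpos _) (hpos _)
    -- recurrence relations
    have e1 := hrec (m+1) (by omega)
    rw [show m+1-1 = m from rfl, show m+1-2 = m-1 by omega] at e1
    have e2 := hrec (m+2) (by omega)
    rw [show m+2-1 = m+1 from rfl, show m+2-2 = m from rfl] at e2
    have ham := (hpos m).ne'
    have ham1 := (hpos (m-1)).ne'
    have hamp1 := (hpos (m+1)).ne'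
    have p1 : x1 * xm = R (m+1) * xm + S (m+1) := by
      rw [hx1_def, hxm_def, div_mul_div_comm, e1]
      field_simp
    have p2 : x2 * x1 = R (m+2) * x1 + S (m+2) := by
      rw [hx2_def, hx1_def, div_mul_div_comm, e2]
      field_simp
    -- condition at m+1
    have hc := hcond (m+1) (by omega)
    rw [show m+1-1 = m from rfl, show m+1-2 = m-1 by omega] at hc
    push_cast at hc
    have hc1 : 0 ≤ ((((m:ℝ)+1) + 1) * R (m+1) - ((m:ℝ)+1) * R (m+2)) * xm * x1 +
        ((((m:ℝ)+1) + 1) * S (m+1) - (m:ℝ) * S (m+2)) * x1 := by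
      have := mul_nonneg (by linarith [hc] : (0:ℝ) ≤
        (((m:ℝ)+1+1) * R (m+1) - ((m:ℝ)+1) * R (m+2)) * xm +
        (((m:ℝ)+1+1) * S (m+1) - ((m:ℝ)+1-1) * S (m+2))) hx1.le
      nlinarith [this]
    -- induction hypothesis, cleared of division
    have ih' : (m:ℝ) * x1 ≤ ((m:ℝ)+1) * xm := by
      rw [div_mul_eq_mul_div, le_div_iff₀ hmpos] at ih
      linarith
    have h2 : 0 ≤ S (m+2) * ((m:ℝ) * x1 - ((m:ℝ)+1) * xm) := by
      nlinarith [hS (m+2), ih']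
    -- key inequality
    have key : ((m:ℝ)+1) * x2 * (x1 * xm) ≤ ((m:ℝ)+2) * x1 * (x1 * xm) := by
      nlinarith [hc1, h2, mul_le_mul_of_nonneg_left p1.le (by positivity : (0:ℝ) ≤ ((m:ℝ)+2) * x1),
        mul_le_mul_of_nonneg_left p1.ge (by positivity : (0:ℝ) ≤ ((m:ℝ)+2) * x1),
        mul_le_mul_of_nonneg_left p2.le (by positivity : (0:ℝ) ≤ ((m:ℝ)+1) * xm),
        mul_le_mul_of_nonneg_left p2.ge (by positivity : (0:ℝ) ≤ ((m:ℝ)+1) * xm)]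
    have key' : ((m:ℝ)+1) * x2 ≤ ((m:ℝ)+2) * x1 :=
      le_of_mul_le_mul_right key (mul_pos hx1 hxm)
    -- conclude
    show a (m+1+1) / a (m+1) ≤ (((m+1:ℕ):ℝ) + 1) / ((m+1:ℕ):ℝ) * (a (m+1) / a (m+1-1))
    rw [show m+1-1 = m from rfl]
    push_cast
    rw [div_mul_eq_mul_div, le_div_iff₀ (by positivity : (0:ℝ) < (m:ℝ)+1)]
    show x2 * ((m:ℝ)+1) ≤ ((m:ℝ)+1+1) * x1
    linarith
end

section
/- The quotient sequence of the Motzkin numbers satisfies 2 ≤ M_n / M_{n-1} ≤ 7/2 for all n ≥ 2. -/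
lemma motzkin_aux (M : ℕ → ℝ)
    (h0 : M 0 = 1) (h1 : M 1 = 1)
    (hrec : ∀ n ≥ 2, M n = ((2 * (n : ℝ) + 1) / (n + 2)) * M (n - 1) +
      (3 * ((n : ℝ) - 1) / (n + 2)) * M (n - 2)) :
    ∀ n, 2 ≤ n → 0 < M n ∧ 0 < M (n + 1) ∧ 2 ≤ M (n + 1) / M n ∧
      M (n + 1) / M n ≤ (7 * (n : ℝ) + 6) / (2 * n + 6) := by
  intro n hn
  induction n, hn using Nat.le_induction with
  | base =>
    have e2 := hrec 2 (by norm_num)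
    have e3 := hrec 3 (by norm_num)
    norm_num [h0, h1] at e2
    norm_num [h0, h1, e2] at e3
    norm_num [e2, e3]
  | succ n hn ih =>
    obtain ⟨hx, hy, hlo, hhi⟩ := ih
    have hN : (2 : ℝ) ≤ (n : ℝ) := by exact_mod_cast hn
    have hlo' : 2 * M n ≤ M (n + 1) := by
      rw [le_div_iff₀ hx] at hlo; linarith
    have hhi'' : (2 * (n : ℝ) + 6) * M (n + 1) ≤ (7 * n + 6) * M n := by
      rw [div_le_div_iff₀ hx (by linarith : (0:ℝ) < 2 * (n:ℝ) + 6)] at hhi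
      linarith
    have erec := hrec (n + 2) (by omega)
    have hidx1 : n + 2 - 1 = n + 1 := by omega
    have hidx2 : n + 2 - 2 = n := by omega
    rw [hidx1, hidx2] at erec
    push_cast at erec
    have hd : (0 : ℝ) < (n : ℝ) + 4 := by linarith
    have e2 : ((n : ℝ) + 4) * M (n + 2) =
        (2 * n + 5) * M (n + 1) + 3 * (n + 1) * M n := by
      rw [erec]; field_simp; ring
    have hmul : (0:ℝ) ≤ M n * (2 * (n:ℝ)^2 + n) := by positivity
    have hlow : 2 * M (n + 1) ≤ M (n + 2) := by
      nlinarith [e2, hhi'', hmul, hx.le, hy.le, hd]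
    have hz : 0 < M (n + 2) := by linarith
    refine ⟨hy, hz, ?_, ?_⟩
    · rw [le_div_iff₀ hy]; linarith
    · push_cast
      rw [div_le_div_iff₀ hy (by positivity : (0:ℝ) < 2 * ((n:ℝ)+1) + 6)]
      nlinarith [e2, hlo', hx.le, hy.le, hN]

theorem motzkin_quotient_bounds (M : ℕ → ℝ)
    (h0 : M 0 = 1) (h1 : M 1 = 1)
    (hrec : ∀ n ≥ 2, M n = ((2 * (n : ℝ) + 1) / (n + 2)) * M (n - 1) +
      (3 * ((n : ℝ) - 1) / (n + 2)) * M (n - 2)) :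
    ∀ n ≥ 2, 2 ≤ M n / M (n - 1) ∧ M n / M (n - 1) ≤ 7 / 2 := by
  intro n hn
  obtain ⟨m, rfl⟩ : ∃ m, n = m + 2 := ⟨n - 2, by omega⟩
  rcases m with _ | m
  · have e2 := hrec 2 (by norm_num)
    norm_num [h0, h1] at e2
    norm_num [e2, h1]
  · have h := motzkin_aux M h0 h1 hrec (m + 2) (by omega)
    obtain ⟨hx, hy, hlo, hhi⟩ := h
    have hidx : m + 2 + 1 - 1 = m + 2 := by omega
    rw [show m + 1 + 2 = m + 2 + 1 from by omega, hidx]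
    refine ⟨hlo, le_trans hhi ?_⟩
    push_cast
    rw [div_le_iff₀ (by positivity : (0:ℝ) < 2 * ((m:ℝ)+2) + 6)]
    nlinarith [Nat.cast_nonneg (α := ℝ) m]
end

section
/- The sequence of Motzkin numbers is log-balanced: for all n ≥ 1, M_n^2 ≤ M_{n-1} M_{n+1} ≤ (1 + 1/n) M_n^2. -/
theorem motzkin_log_balanced (M : ℕ → ℝ)
    (h0 : M 0 = 1) (h1 : M 1 = 1)
    (hrec : ∀ n : ℕ, n ≥ 2 → ((n : ℝ) + 2) * M n =
      (2 * (n : ℝ) + 1) * M (n - 1) + 3 * ((n : ℝ) - 1) * M (n - 2)) :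
    ∀ n ≥ 1, (M n) ^ 2 ≤ M (n - 1) * M (n + 1) ∧
      M (n - 1) * M (n + 1) ≤ (1 + 1 / (n : ℝ)) * (M n) ^ 2 := by
  have key : ∀ m : ℕ, ((m:ℝ) + 4) * M (m+2) = (2*(m:ℝ) + 5) * M (m+1) + 3*((m:ℝ)+1) * M m := by
    intro m
    have h := hrec (m+2) (by omega)
    have e1 : m + 2 - 1 = m + 1 := by omega
    have e2 : m + 2 - 2 = m := by omega
    rw [e1, e2] at h
    push_cast at h
    linarith
  have h2 : M 2 = 2 := by
    have := key 0
    norm_num [h0, h1] at this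
    linarith
  -- Invariant: bounds on the ratio M(m+2)/M(m+1), with cleared denominators
  have inv : ∀ m : ℕ, 0 < M (m+1) ∧ 0 < M (m+2) ∧
      3*(2*(m:ℝ)+3)*((m:ℝ)+3) * M (m+1) ≤ 2*((m:ℝ)+2)*((m:ℝ)+4) * M (m+2) ∧
      (2*(m:ℝ)+9) * M (m+2) ≤ (6*(m:ℝ)+18) * M (m+1) := by
    intro m
    induction m with
    | zero => norm_num [h1, h2]
    | succ k ih =>
      obtain ⟨hp1, hp2, hL, hU⟩ := ih
      have hk := key (k+1)
      push_cast at hk ⊢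
      set x := (k:ℝ) with hxdef
      have hx : (0:ℝ) ≤ x := Nat.cast_nonneg k
      simp only [show k+1+2 = k+3 by omega, show k+1+1 = k+2 by omega] at hk ⊢
      have hp3 : 0 < M (k+3) := by nlinarith
      refine ⟨hp2, hp3, ?_, ?_⟩
      · nlinarith [hU, hp1, hp2, hx]
      · nlinarith [hL, hp1, hp2, hx, mul_nonneg hx hx]
  intro n hn
  match n, hn with
  | 1, _ =>
    constructor
    · norm_num [h0, h1, h2]
    · norm_num [h0, h1, h2]
  | (m+2), _ =>
    obtain ⟨hp1, hp2, hL, hU⟩ := inv m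
    have hk := key (m+1)
    push_cast [Nat.cast_ofNat] at hk ⊢
    set x := (m:ℝ) with hxdef
    have hx : (0:ℝ) ≤ x := Nat.cast_nonneg m
    simp only [show m+1+2 = m+3 by omega, show m+1+1 = m+2 by omega,
      show m+2+1 = m+3 by omega] at hk ⊢
    have hp3 : 0 < M (m+3) := by nlinarith
    have hpos : (0:ℝ) < x + 2 := by linarith
    have hH1 : 0 ≤ (6*x+18)*M (m+1) - (2*x+9)*M (m+2) := by linarith
    have hH2 : 0 ≤ 2*(x+2)*(x+4)*M (m+2) - 3*(2*x+3)*(x+3)*M (m+1) := by linarith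
    constructor
    · -- log-convexity: M(m+2)^2 ≤ M(m+1) * M(m+3)
      have t1 : 0 ≤ 9*x*M (m+2)^2 :=
        mul_nonneg (by linarith) (sq_nonneg _)
      have t2 : 0 ≤ (24*x^2+156*x+234) *
          (M (m+2) * ((6*x+18)*M (m+1) - (2*x+9)*M (m+2))) :=
        mul_nonneg (by nlinarith [sq_nonneg x]) (mul_nonneg hp2.le hH1)
      have t3 : 0 ≤ 3*(x+2) * ((6*x+18)*M (m+1) - (2*x+9)*M (m+2))^2 :=
        mul_nonneg (by linarith) (sq_nonneg _)
      have hscale : ((6*x+18)^2*(x+5)) * M (m+2)^2 ≤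
          ((6*x+18)^2*(x+5)) * (M (m+1) * M (m+3)) := by
        have expand : ((6*x+18)^2*(x+5)) * (M (m+1) * M (m+3)) =
            (6*x+18)^2 * (((2*x+7)*M (m+2)+3*(x+2)*M (m+1)) * M (m+1)) := by
          linear_combination ((6*x+18)^2 * M (m+1)) * hk
        rw [expand]
        linarith [t1, t2, t3]
      have hcpos : (0:ℝ) < (6*x+18)^2*(x+5) := by
        have h6 : (0:ℝ) < 6*x+18 := by linarith
        exact mul_pos (pow_pos h6 2) (by linarith)
      exact le_of_mul_le_mul_left hscale hcpos
    · -- log-balance: M(m+1) * M(m+3) ≤ (1 + 1/(x+2)) * M(m+2)^2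
      have s1 : 0 ≤ (x+3)*(x+5) *
          (2*(x+2)*(x+4)*M (m+2) - 3*(2*x+3)*(x+3)*M (m+1))^2 :=
        mul_nonneg (by nlinarith [sq_nonneg x]) (sq_nonneg _)
      have s2 : 0 ≤ (8*x^4+104*x^3+474*x^2+898*x+586) *
          (M (m+1) * (2*(x+2)*(x+4)*M (m+2) - 3*(2*x+3)*(x+3)*M (m+1))) := by
        apply mul_nonneg _ (mul_nonneg hp1.le hH2)
        have p2 : (0:ℝ) ≤ x^2 := sq_nonneg x
        have p3 : (0:ℝ) ≤ x^3 := by positivity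
        have p4 : (0:ℝ) ≤ x^4 := by positivity
        linarith
      have s3 : 0 ≤ (36*x^5+435*x^4+2028*x^3+4500*x^2+4686*x+1815) * M (m+1)^2 := by
        apply mul_nonneg _ (sq_nonneg _)
        have p2 : (0:ℝ) ≤ x^2 := sq_nonneg x
        have p3 : (0:ℝ) ≤ x^3 := by positivity
        have p4 : (0:ℝ) ≤ x^4 := by positivity
        have p5 : (0:ℝ) ≤ x^5 := by positivity
        linarith
      have hgoal2 : ((x+5)*(2*(x+2)*(x+4))^2) * (M (m+1) * M (m+3) * (x+2)) ≤
          ((x+5)*(2*(x+2)*(x+4))^2) * ((x+3) * M (m+2)^2) := by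
        have expand2 : ((x+5)*(2*(x+2)*(x+4))^2) * (M (m+1) * M (m+3) * (x+2)) =
            ((2*(x+2)*(x+4))^2) *
              ((x+2)*(((2*x+7)*M (m+2)+3*(x+2)*M (m+1)) * M (m+1))) := by
          linear_combination ((x+2)*(2*(x+2)*(x+4))^2 * M (m+1)) * hk
        rw [expand2]
        linarith [s1, s2, s3]
      have hcpos2 : (0:ℝ) < (x+5)*(2*(x+2)*(x+4))^2 := by
        have hd : (0:ℝ) < 2*(x+2)*(x+4) := by nlinarith
        exact mul_pos (by linarith) (pow_pos hd 2)
      have hfin : M (m+1) * M (m+3) * (x+2) ≤ (x+3) * M (m+2)^2 :=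
        le_of_mul_le_mul_left hgoal2 hcpos2
      have hfrac : (1 + 1/(x+2)) = (x+3)/(x+2) := by
        field_simp
        ring
      rw [hfrac, div_mul_eq_mul_div, le_div_iff₀ hpos]
      linarith
end

section
/- The Franel numbers of order 3, F_n = Σ_{k=0}^n C(n,k)^3, satisfy 5 ≤ F_n / F_{n-1} ≤ 9 for all n ≥ 2. -/
/-!
Write `a k = C(n - 1, k)`. Pascal's rule `C(n, k + 1) = a k + a (k + 1)` and expanding the cube
give `F n = 2 F (n - 1) + 3 S` with `S = ∑ a k a (k + 1) (a k + a (k + 1))`. Termwise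
`x y (x + y) ≤ x³ + y³` gives `S ≤ 2 F (n - 1)`. Conversely `a (k + 1) ≤ a k + a (k + 2)` (Pascal's
rule one row lower), multiplied by `a (k + 1)²` and summed, gives `F (n - 1) ≤ S`.
Hence `5 F (n - 1) ≤ F n ≤ 8 F (n - 1)`.
-/

open Finset

section CubeSums

variable {R : Type*}

theorem sum_range_add_succ_pow_three [CommSemiring R] (a : ℕ → R) (L : ℕ) :
    a 0 ^ 3 + ∑ j ∈ range L, (a j + a (j + 1)) ^ 3 =
      ∑ j ∈ range L, a j ^ 3 + ∑ j ∈ range (L + 1), a j ^ 3 +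
        3 * ∑ j ∈ range L, a j * a (j + 1) * (a j + a (j + 1)) := by
  have hcube : ∀ j, (a j + a (j + 1)) ^ 3 =
      a j ^ 3 + a (j + 1) ^ 3 + 3 * (a j * a (j + 1) * (a j + a (j + 1))) := fun j => by ring
  simp only [hcube, sum_add_distrib, ← mul_sum, sum_range_succ' (fun j => a j ^ 3) L]
  ring

theorem sum_range_choose_succ_pow_three [CommSemiring R] (n : ℕ) :
    ∑ k ∈ range (n + 2), ((n + 1).choose k : R) ^ 3 =
      2 * ∑ k ∈ range (n + 1), (n.choose k : R) ^ 3 +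
        3 * ∑ k ∈ range (n + 1),
          (n.choose k : R) * n.choose (k + 1) * (n.choose k + n.choose (k + 1)) := by
  have h := sum_range_add_succ_pow_three (fun k => (n.choose k : R)) (n + 1)
  simp only [sum_range_succ _ (n + 1), Nat.choose_succ_self, Nat.cast_zero, Nat.choose_zero_right,
    Nat.cast_one] at h
  rw [sum_range_succ', Nat.choose_zero_right]
  simp only [Nat.choose_succ_succ', Nat.cast_add, Nat.cast_one]
  rw [add_comm, h]
  ring

variable [CommRing R] [LinearOrder R] [IsStrictOrderedRing R]

theorem mul_mul_add_le_pow_three_add_pow_three {x y : R} (hx : 0 ≤ x) (hy : 0 ≤ y) :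
    x * y * (x + y) ≤ x ^ 3 + y ^ 3 := by
  nlinarith [mul_nonneg (add_nonneg hx hy) (sq_nonneg (x - y))]

theorem sum_range_mul_mul_add_le {a : ℕ → R} (ha : ∀ j, 0 ≤ a j) {L : ℕ} (hL : a L = 0) :
    ∑ j ∈ range L, a j * a (j + 1) * (a j + a (j + 1)) ≤ 2 * ∑ j ∈ range L, a j ^ 3 := by
  have hshift : ∑ j ∈ range L, a (j + 1) ^ 3 + a 0 ^ 3 = ∑ j ∈ range L, a j ^ 3 := by
    rw [← sum_range_succ' (fun j => a j ^ 3), sum_range_succ, hL, zero_pow three_ne_zero, add_zero]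
  calc ∑ j ∈ range L, a j * a (j + 1) * (a j + a (j + 1))
      ≤ ∑ j ∈ range L, (a j ^ 3 + a (j + 1) ^ 3) :=
        sum_le_sum fun j _ => mul_mul_add_le_pow_three_add_pow_three (ha j) (ha (j + 1))
    _ ≤ 2 * ∑ j ∈ range L, a j ^ 3 := by
        rw [sum_add_distrib]
        linarith [pow_nonneg (ha 0) 3]

theorem sum_range_pow_three_le {a : ℕ → R} (ha : ∀ j, 0 ≤ a j) (h0 : a 0 ≤ a 1)
    (h : ∀ j, a (j + 1) ≤ a j + a (j + 2)) (L : ℕ) :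
    ∑ j ∈ range (L + 1), a j ^ 3 ≤
      ∑ j ∈ range (L + 1), a j * a (j + 1) * (a j + a (j + 1)) := by
  have hstep : ∀ j, a (j + 1) ^ 3 ≤ a j * a (j + 1) ^ 2 + a (j + 1) ^ 2 * a (j + 2) := fun j => by
    nlinarith [mul_le_mul_of_nonneg_left (h j) (sq_nonneg (a (j + 1)))]
  have hlast : 0 ≤ a L * a (L + 1) ^ 2 := mul_nonneg (ha L) (sq_nonneg _)
  calc ∑ j ∈ range (L + 1), a j ^ 3
      = ∑ j ∈ range L, a (j + 1) ^ 3 + a 0 ^ 3 := sum_range_succ' _ _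
    _ ≤ ∑ j ∈ range L, (a j * a (j + 1) ^ 2 + a (j + 1) ^ 2 * a (j + 2)) + a 0 ^ 2 * a 1 := by
        gcongr with j
        · exact hstep j
        · nlinarith [mul_le_mul_of_nonneg_left h0 (sq_nonneg (a 0))]
    _ = ∑ j ∈ range L, a j * a (j + 1) ^ 2 + ∑ j ∈ range (L + 1), a j ^ 2 * a (j + 1) := by
        rw [sum_range_succ' (fun j => a j ^ 2 * a (j + 1)), sum_add_distrib]
        ring
    _ ≤ ∑ j ∈ range (L + 1), a j * a (j + 1) ^ 2 + ∑ j ∈ range (L + 1), a j ^ 2 * a (j + 1) := by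
        rw [sum_range_succ (fun j => a j * a (j + 1) ^ 2) L]
        linarith
    _ = ∑ j ∈ range (L + 1), a j * a (j + 1) * (a j + a (j + 1)) := by
        rw [← sum_add_distrib]
        exact sum_congr rfl fun j _ => by ring

end CubeSums

theorem Nat.choose_succ_le_choose_add_choose (N j : ℕ) :
    (N + 1).choose (j + 1) ≤ (N + 1).choose j + (N + 1).choose (j + 2) := by
  have h := Nat.choose_le_choose j (Nat.le_add_right N 1)
  rw [Nat.choose_succ_succ' N j, Nat.choose_succ_succ' N (j + 1)]
  omega

theorem franel_quotient_bounds (F : ℕ → ℝ)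
    (hF : ∀ n, F n = ∑ k ∈ Finset.range (n + 1), ((n.choose k : ℝ)) ^ 3) :
    ∀ n ≥ 2, 5 ≤ F n / F (n - 1) ∧ F n / F (n - 1) ≤ 9 := by
  intro n hn
  obtain ⟨N, rfl⟩ : ∃ N, n = N + 2 := ⟨n - 2, by omega⟩
  set a : ℕ → ℝ := fun k => ((N + 1).choose k : ℝ)
  set S := ∑ j ∈ range (N + 2), a j * a (j + 1) * (a j + a (j + 1))
  have ha : ∀ j, 0 ≤ a j := fun j => Nat.cast_nonneg _
  have hF₂ : F (N + 2) = 2 * F (N + 1) + 3 * S := by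
    rw [hF, hF, sum_range_choose_succ_pow_three]
  have hlow : F (N + 1) ≤ S := hF (N + 1) ▸ sum_range_pow_three_le ha (by simp [a])
    (fun j => by simp only [a]; exact_mod_cast Nat.choose_succ_le_choose_add_choose N j) (N + 1)
  have hup : S ≤ 2 * F (N + 1) :=
    hF (N + 1) ▸ sum_range_mul_mul_add_le ha (by simp [a, Nat.choose_succ_self])
  have hpos : 0 < F (N + 1) := by
    rw [hF]
    exact sum_pos' (fun k _ => by positivity) ⟨0, by simp, by simp⟩
  rw [show N + 2 - 1 = N + 1 from rfl, le_div_iff₀ hpos, div_le_iff₀ hpos]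
  constructor <;> linarith
end

section
/- The quotient sequence of the large Schröder numbers satisfies 3 ≤ r_n / r_{n-1} ≤ 6 for all n ≥ 2. -/
theorem schroeder_quotient_bounds (r : ℕ → ℝ)
    (h0 : r 0 = 1) (h1 : r 1 = 2)
    (hrec : ∀ n : ℕ, n ≥ 2 → ((n : ℝ) + 1) * r n =
      3 * (2 * (n : ℝ) - 1) * r (n - 1) - ((n : ℝ) - 2) * r (n - 2)) :
    ∀ n : ℕ, n ≥ 2 → 3 ≤ r n / r (n - 1) ∧ r n / r (n - 1) ≤ 6 := by
  have key : ∀ n : ℕ, n ≥ 2 → 0 < r (n - 1) ∧ 3 * r (n - 1) ≤ r n ∧ r n ≤ 6 * r (n - 1) := by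
    intro n hn
    induction n, hn using Nat.le_induction with
    | base =>
      have h2 := hrec 2 (le_refl 2)
      norm_num [h0, h1] at h2
      simp only [show (2:ℕ) - 1 = 1 from rfl, h1]
      refine ⟨by norm_num, by linarith, by linarith⟩
    | succ n hn ih =>
      obtain ⟨hpos, hlo, hhi⟩ := ih
      have hn' : (2:ℝ) ≤ (n:ℝ) := by exact_mod_cast hn
      have hrpos : 0 < r n := by linarith
      have h := hrec (n + 1) (by omega)
      have e1 : n + 1 - 1 = n := by omega
      have e2 : n + 1 - 2 = n - 1 := by omega
      rw [e1, e2] at h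
      push_cast at h
      simp only [e1]
      refine ⟨hrpos, ?_, ?_⟩
      · nlinarith [mul_le_mul_of_nonneg_left hlo (by linarith : (0:ℝ) ≤ (n:ℝ) - 1),
          mul_pos (show (0:ℝ) < (n:ℝ) - 1 by linarith) hrpos]
      · nlinarith [mul_pos (show (0:ℝ) < (n:ℝ) - 1 by linarith) hpos,
          mul_pos (show (0:ℝ) < (n:ℝ) - 1 by linarith) hrpos]
  intro n hn
  obtain ⟨hpos, hlo, hhi⟩ := key n hn
  constructor
  · rw [le_div_iff₀ hpos]; linarith
  · rw [div_le_iff₀ hpos]; linarith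
end

section
/- The sequence of large Schröder numbers is log-balanced: for all n ≥ 1, r_n^2 ≤ r_{n-1} r_{n+1} ≤ (1 + 1/n) r_n^2. -/
/-!
Write `x = r (m + 1) / r m`. Through the recurrence
`(m + 3) r (m + 2) = (6m + 9) r (m + 1) - m r m`, the two inequalities at `n = m + 1` say that
`x` lies below the larger root `β m` of `(m + 3) x² - (6m + 9) x + m` and above the larger root
`α m` of `(m + 2)(m + 3) x² - (m + 1)(6m + 9) x + m(m + 1)`. So it suffices to show
`α m ≤ x ≤ β m`, by induction on `m`. The map `x ↦ (6m + 9 - m / x) / (m + 3)` sending one ratio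
to the next is increasing, fixes `β m` and sends `α m` to `(m + 2) α m / (m + 1)`; and
`β m ≤ β (m + 1)`, `(m + 1) α (m + 1) ≤ (m + 2) α m`, both read off from the sign of the next
quadratic at the old root.
-/

/-- The larger root of `a * x ^ 2 - b * x + c`, when `0 < a` and `4 * a * c ≤ b ^ 2`. -/
noncomputable def largerRoot (a b c : ℝ) : ℝ := (b + √(b ^ 2 - 4 * a * c)) / (2 * a)

section Quadratic

variable {a b c ρ x : ℝ}

lemma largerRoot_isRoot (ha : 0 < a) (hd : 4 * a * c ≤ b ^ 2) :
    a * largerRoot a b c ^ 2 - b * largerRoot a b c + c = 0 := by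
  have hs : √(b ^ 2 - 4 * a * c) ^ 2 = b ^ 2 - 4 * a * c := Real.sq_sqrt (by linarith)
  unfold largerRoot
  generalize √(b ^ 2 - 4 * a * c) = s at hs ⊢
  field_simp
  linear_combination hs

lemma le_two_mul_largerRoot (ha : 0 < a) : b ≤ 2 * a * largerRoot a b c := by
  rw [largerRoot, mul_div_cancel₀ _ (by positivity)]
  linarith [Real.sqrt_nonneg (b ^ 2 - 4 * a * c)]

lemma quadratic_eq_mul_of_isRoot (hρ : a * ρ ^ 2 - b * ρ + c = 0) (x : ℝ) :
    a * x ^ 2 - b * x + c = (x - ρ) * (a * (x + ρ) - b) := by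
  linear_combination hρ

variable (ha : 0 < a) (hρ : a * ρ ^ 2 - b * ρ + c = 0)
include ha hρ

lemma quadratic_nonneg_of_root_le (hv : b ≤ 2 * a * ρ) (hx : ρ ≤ x) :
    0 ≤ a * x ^ 2 - b * x + c := by
  rw [quadratic_eq_mul_of_isRoot hρ]
  exact mul_nonneg (by linarith) (by nlinarith)

lemma le_root_of_quadratic_nonpos (hv : b ≤ 2 * a * ρ) (hx : a * x ^ 2 - b * x + c ≤ 0) :
    x ≤ ρ := by
  by_contra! hρx
  rw [quadratic_eq_mul_of_isRoot hρ] at hx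
  exact hx.not_gt (mul_pos (by linarith) (by nlinarith))

lemma root_le_of_quadratic_nonneg (hv : b ≤ 2 * a * x) (hx : 0 ≤ a * x ^ 2 - b * x + c) :
    ρ ≤ x := by
  by_contra! hxρ
  rw [quadratic_eq_mul_of_isRoot hρ] at hx
  exact hx.not_gt (mul_neg_of_neg_of_pos (by linarith) (by nlinarith))

lemma quadratic_nonpos_of_le_of_le_root {y : ℝ} (hy : a * y ^ 2 - b * y + c < 0)
    (hyx : y ≤ x) (hxρ : x ≤ ρ) : a * x ^ 2 - b * x + c ≤ 0 := by
  rw [quadratic_eq_mul_of_isRoot hρ] at hy ⊢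
  have hy' : 0 < a * (y + ρ) - b := by
    by_contra! h
    exact hy.not_ge (mul_nonneg_of_nonpos_of_nonpos (by linarith) h)
  exact mul_nonpos_of_nonpos_of_nonneg (by linarith) (by nlinarith)

end Quadratic

-- `β m` and `α m` of the header
noncomputable def ratioUpper (m : ℝ) : ℝ := largerRoot (m + 3) (6 * m + 9) m

noncomputable def ratioLower (m : ℝ) : ℝ :=
  largerRoot ((m + 2) * (m + 3)) ((m + 1) * (6 * m + 9)) (m * (m + 1))

section Bounds

variable {m : ℝ}

lemma ratioUpper_isRoot (hm : 0 ≤ m) :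
    (m + 3) * ratioUpper m ^ 2 - (6 * m + 9) * ratioUpper m + m = 0 :=
  largerRoot_isRoot (by linarith) (by nlinarith)

lemma ratioLower_isRoot (hm : 0 ≤ m) :
    (m + 2) * (m + 3) * ratioLower m ^ 2 - (m + 1) * (6 * m + 9) * ratioLower m
      + m * (m + 1) = 0 :=
  largerRoot_isRoot (by positivity) (by nlinarith [mul_nonneg hm (mul_nonneg hm hm)])

lemma six_mul_add_nine_le_ratioUpper (hm : 0 ≤ m) : 6 * m + 9 ≤ 2 * (m + 3) * ratioUpper m :=
  le_two_mul_largerRoot (by positivity)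

lemma le_two_mul_ratioLower (hm : 0 ≤ m) :
    (m + 1) * (6 * m + 9) ≤ 2 * ((m + 2) * (m + 3)) * ratioLower m :=
  le_two_mul_largerRoot (by positivity)

lemma one_le_ratioUpper (hm : 0 ≤ m) : 1 ≤ ratioUpper m :=
  le_root_of_quadratic_nonpos (by linarith) (ratioUpper_isRoot hm)
    (six_mul_add_nine_le_ratioUpper hm) (by linarith)

lemma one_le_ratioLower (hm : 0 ≤ m) : 1 ≤ ratioLower m :=
  le_root_of_quadratic_nonpos (by positivity) (ratioLower_isRoot hm)
    (le_two_mul_ratioLower hm) (by nlinarith)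

lemma ratioUpper_le_succ (hm : 0 ≤ m) : ratioUpper m ≤ ratioUpper (m + 1) := by
  have hβ := one_le_ratioUpper hm
  refine le_root_of_quadratic_nonpos (by linarith) (ratioUpper_isRoot (by linarith))
    (six_mul_add_nine_le_ratioUpper (by linarith)) ?_
  -- the quadratic for `m + 1` exceeds the one for `m` by `x² - 6x + 1`, and at the root `β` of the
  -- latter `(m + 3)(β² - 6β + 1) = 3 - 9β < 0`
  nlinarith [ratioUpper_isRoot hm]

lemma succ_mul_ratioLower_succ_le (hm : 0 ≤ m) :
    (m + 1) * ratioLower (m + 1) ≤ (m + 2) * ratioLower m := by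
  have hα := one_le_ratioLower hm
  have hroot := ratioLower_isRoot hm
  have hv := le_two_mul_ratioLower hm
  rw [← le_div_iff₀' (by linarith)]
  refine root_le_of_quadratic_nonneg (by positivity) (ratioLower_isRoot (by linarith)) ?_ ?_
  · rw [mul_div_assoc', le_div_iff₀ (by linarith)]
    nlinarith
  · -- at `y = (m + 2) α / (m + 1)` the quadratic for `m + 1` equals
    -- `(m + 2)((6m + 6) α - 2m + 1) / (m + 1)`
    have hpos : 0 ≤ (m + 2) * (m + 1) * ((6 * m + 6) * ratioLower m - 2 * m + 1) := by
      have : 0 ≤ (6 * m + 6) * ratioLower m - 2 * m + 1 := by nlinarith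
      positivity
    have key : (m + 2) * (m + 4) * ((m + 2) * (m + 3) * ratioLower m ^ 2
        - (m + 1) * (6 * m + 9) * ratioLower m + m * (m + 1)) = 0 := by rw [hroot, mul_zero]
    field_simp
    linarith

lemma ratioLower_zero_le_two : ratioLower 0 ≤ 2 :=
  root_le_of_quadratic_nonneg (by norm_num) (ratioLower_isRoot le_rfl) (by norm_num)
    (by norm_num)

lemma two_le_ratioUpper_zero : 2 ≤ ratioUpper 0 :=
  le_root_of_quadratic_nonpos (by norm_num) (ratioUpper_isRoot le_rfl)
    (six_mul_add_nine_le_ratioUpper le_rfl) (by norm_num)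

end Bounds

section Step

variable {m u v w : ℝ} (hm : 0 ≤ m) (hrec : (m + 3) * w = (6 * m + 9) * v - m * u)
include hm hrec

lemma le_ratioUpper_succ_mul (hv₀ : 0 ≤ v) (hv : v ≤ ratioUpper m * u) :
    w ≤ ratioUpper (m + 1) * v := by
  have hβ := one_le_ratioUpper hm
  have hroot := ratioUpper_isRoot hm
  have hfix : (m + 3) * ratioUpper m * (w - ratioUpper m * v) = m * (v - ratioUpper m * u) := by
    linear_combination ratioUpper m * hrec - v * hroot
  have hw : w ≤ ratioUpper m * v := by
    refine sub_nonpos.1 (nonpos_of_mul_nonpos_right ?_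
      (by positivity : 0 < (m + 3) * ratioUpper m))
    rw [hfix]
    exact mul_nonpos_of_nonneg_of_nonpos hm (by linarith)
  exact hw.trans (mul_le_mul_of_nonneg_right (ratioUpper_le_succ hm) hv₀)

lemma ratioLower_succ_mul_le (hv₀ : 0 ≤ v) (hv : ratioLower m * u ≤ v) :
    ratioLower (m + 1) * v ≤ w := by
  have hα := one_le_ratioLower hm
  have hroot := ratioLower_isRoot hm
  have hfix : (m + 3) * ratioLower m * ((m + 1) * w - (m + 2) * ratioLower m * v)
      = m * (m + 1) * (v - ratioLower m * u) := by
    linear_combination (m + 1) * ratioLower m * hrec - v * hroot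
  have hw : (m + 2) * ratioLower m * v ≤ (m + 1) * w := by
    refine sub_nonneg.1 (nonneg_of_mul_nonneg_right ?_
      (by positivity : 0 < (m + 3) * ratioLower m))
    rw [hfix]
    exact mul_nonneg (by positivity) (by linarith)
  have := mul_le_mul_of_nonneg_right (succ_mul_ratioLower_succ_le hm) hv₀
  nlinarith

lemma sq_le_mul_of_le_ratioUpper (hu : 0 < u) (huv : u ≤ v) (hv : v ≤ ratioUpper m * u) :
    v ^ 2 ≤ u * w := by
  have hx := quadratic_nonpos_of_le_of_le_root (x := v / u) (y := 1) (by linarith)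
    (ratioUpper_isRoot hm) (by linarith) ((one_le_div hu).2 huv) ((div_le_iff₀ hu).2 hv)
  have hP : (m + 3) * (v ^ 2 - u * w)
      = u ^ 2 * ((m + 3) * (v / u) ^ 2 - (6 * m + 9) * (v / u) + m) := by
    field_simp
    linear_combination -u * hrec
  nlinarith [mul_nonpos_of_nonneg_of_nonpos (sq_nonneg u) hx]

lemma mul_le_of_ratioLower_le (hu : 0 < u) (hv : ratioLower m * u ≤ v) :
    u * w ≤ (1 + 1 / (m + 1)) * v ^ 2 := by
  have hx := quadratic_nonneg_of_root_le (x := v / u) (by positivity) (ratioLower_isRoot hm)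
    (le_two_mul_ratioLower hm) ((le_div_iff₀ hu).2 hv)
  have hQ : (m + 3) * ((m + 2) * v ^ 2 - (m + 1) * (u * w))
      = u ^ 2 * ((m + 2) * (m + 3) * (v / u) ^ 2 - (m + 1) * (6 * m + 9) * (v / u)
        + m * (m + 1)) := by
    field_simp
    linear_combination -(m + 1) * u * hrec
  rw [one_add_div (by linarith), div_mul_eq_mul_div, le_div_iff₀ (by linarith)]
  nlinarith [mul_nonneg (sq_nonneg u) hx]

end Step

lemma schroeder_ratio_bounds {r : ℕ → ℝ} (h0 : r 0 = 1) (h1 : r 1 = 2)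
    (hrec : ∀ m : ℕ, ((m : ℝ) + 3) * r (m + 2) = (6 * m + 9) * r (m + 1) - m * r m) (m : ℕ) :
    0 < r m ∧ ratioLower m * r m ≤ r (m + 1) ∧ r (m + 1) ≤ ratioUpper m * r m := by
  induction m with
  | zero =>
    simp only [Nat.cast_zero, h0, h1, mul_one]
    exact ⟨one_pos, ratioLower_zero_le_two, two_le_ratioUpper_zero⟩
  | succ m ih =>
    obtain ⟨hpos, hlow, hup⟩ := ih
    have hm : (0 : ℝ) ≤ m := m.cast_nonneg
    have hpos' : 0 < r (m + 1) := by nlinarith [one_le_ratioLower hm]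
    push_cast
    exact ⟨hpos', ratioLower_succ_mul_le hm (hrec m) hpos'.le hlow,
      le_ratioUpper_succ_mul hm (hrec m) hpos'.le hup⟩

theorem schroeder_log_balanced (r : ℕ → ℝ)
    (h0 : r 0 = 1) (h1 : r 1 = 2)
    (hrec : ∀ n : ℕ, n ≥ 2 → ((n : ℝ) + 1) * r n =
      3 * (2 * (n : ℝ) - 1) * r (n - 1) - ((n : ℝ) - 2) * r (n - 2)) :
    ∀ n ≥ 1, (r n) ^ 2 ≤ r (n - 1) * r (n + 1) ∧
      r (n - 1) * r (n + 1) ≤ (1 + 1 / (n : ℝ)) * (r n) ^ 2 := by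
  have hrec' (m : ℕ) : ((m : ℝ) + 3) * r (m + 2) = (6 * m + 9) * r (m + 1) - m * r m := by
    have h := hrec (m + 2) (by omega)
    push_cast at h
    linear_combination h
  intro n hn
  obtain ⟨m, rfl⟩ := Nat.exists_eq_add_of_le' hn
  obtain ⟨hpos, hlow, hup⟩ := schroeder_ratio_bounds h0 h1 hrec' m
  have hm : (0 : ℝ) ≤ m := m.cast_nonneg
  have hmono : r m ≤ r (m + 1) := by nlinarith [one_le_ratioLower hm]
  simp only [Nat.add_sub_cancel, Nat.cast_add, Nat.cast_one]
  exact ⟨sq_le_mul_of_le_ratioUpper hm (hrec' m) hpos hmono hup,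
    mul_le_of_ratioLower_le hm (hrec' m) hpos hlow⟩
end

section
/- Fix a real t ≥ 1 and let P_n(t) be defined by P_0 = 1, P_1 = t, and n P_n = (2n−1) t P_{n-1} − (n−1) P_{n-2} for n ≥ 2 (Legendre polynomial values). Then the sequence (P_n(t))_{n≥0} is log-balanced: for all n ≥ 1, P_n(t)^2 ≤ P_{n-1}(t) P_{n+1}(t) ≤ (1 + 1/n) P_n(t)^2. -/
set_option maxHeartbeats 1000000 in

theorem legendre_log_balanced (t : ℝ) (ht : 1 ≤ t) (P : ℕ → ℝ)
    (h0 : P 0 = 1) (h1 : P 1 = t)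
    (hrec : ∀ n : ℕ, n ≥ 2 → (n : ℝ) * P n =
      (2 * (n : ℝ) - 1) * t * P (n - 1) - ((n : ℝ) - 1) * P (n - 2)) :
    ∀ n ≥ 1, (P n) ^ 2 ≤ P (n - 1) * P (n + 1) ∧
      P (n - 1) * P (n + 1) ≤ (1 + 1 / (n : ℝ)) * (P n) ^ 2 := by
  have key : ∀ n : ℕ, ((n : ℝ) + 2) * P (n + 2) =
      (2 * (n : ℝ) + 3) * t * P (n + 1) - ((n : ℝ) + 1) * P n := by
    intro n
    have h := hrec (n + 2) (by omega)
    have e1 : n + 2 - 1 = n + 1 := by omega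
    have e2 : n + 2 - 2 = n := by omega
    rw [e1, e2] at h
    push_cast at h
    linarith [h]
  have Q : ∀ n : ℕ, 0 < P n ∧ 0 < P (n + 1) ∧ t * P n ≤ P (n + 1) ∧
      (P (n + 1)) ^ 2 ≤ P n * P (n + 2) ∧
      ((n : ℝ) + 1) * (P n * P (n + 2)) ≤ ((n : ℝ) + 2) * (P (n + 1)) ^ 2 := by
    intro n
    induction n with
    | zero =>
      have k0 := key 0
      norm_num [h0, h1] at k0
      refine ⟨?_, ?_, ?_, ?_, ?_⟩ <;> norm_num [h0, h1]
      · linarith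
      · nlinarith [k0, mul_le_mul ht ht (by norm_num) (by linarith : (0:ℝ) ≤ t)]
      · nlinarith [k0, mul_le_mul ht ht (by norm_num) (by linarith : (0:ℝ) ≤ t)]
    | succ n ih =>
      obtain ⟨hp, hq, hpq, hA, hB⟩ := ih
      have R1 := key n
      have R2 : ((n : ℝ) + 3) * P (n + 3) =
          (2 * (n : ℝ) + 5) * t * P (n + 2) - ((n : ℝ) + 2) * P (n + 1) := by
        have h := key (n + 1)
        simp only [show n + 1 + 2 = n + 3 from rfl, show n + 1 + 1 = n + 2 from rfl] at h
        push_cast at h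
        linarith [h]
      have hn : (0:ℝ) ≤ (n : ℝ) := Nat.cast_nonneg n
      have ht0 : (0:ℝ) < t := by linarith
      have hr : 0 < P (n + 2) := by nlinarith [mul_pos hq hq]
      have hp_le_q : P n ≤ P (n + 1) := by nlinarith
      have htq : t * P (n + 1) ≤ P (n + 2) := by
        have h2 : P n ≤ t * P (n + 1) := by nlinarith
        nlinarith [R1]
      have hq_le_r : P (n + 1) ≤ P (n + 2) := by nlinarith
      have hq2r2 : (P (n + 1)) ^ 2 ≤ (P (n + 2)) ^ 2 := by nlinarith
      have hnewA : (P (n + 2)) ^ 2 ≤ P (n + 1) * P (n + 3) := by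
        have E3 : (2*(n:ℝ)+3) * ((n:ℝ)+3) * (P (n+1) * P (n+3) - (P (n+2))^2) =
            (2*(n:ℝ)+5) * ((n:ℝ)+1) * (P n * P (n+2)) + (P (n+2))^2
              - (2*(n:ℝ)+3) * ((n:ℝ)+2) * (P (n+1))^2 := by
          linear_combination (2*(n:ℝ)+3) * P (n+1) * R2 - (2*(n:ℝ)+5) * P (n+2) * R1
        have hA2 : (2*(n:ℝ)+5) * ((n:ℝ)+1) * (P (n+1))^2 ≤
            (2*(n:ℝ)+5) * ((n:ℝ)+1) * (P n * P (n+2)) := by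
          apply mul_le_mul_of_nonneg_left hA
          nlinarith
        have hc : (0:ℝ) < (2*(n:ℝ)+3) * ((n:ℝ)+3) := by nlinarith
        nlinarith [E3, hA2, hq2r2, hc]
      refine ⟨hq, hr, htq, ?_, ?_⟩
      · show (P (n + 2)) ^ 2 ≤ P (n + 1) * P (n + 3)
        exact hnewA
      · simp only [show n + 1 + 2 = n + 3 from rfl, show n + 1 + 1 = n + 2 from rfl]
        push_cast
        show ((n:ℝ) + 1 + 1) * (P (n + 1) * P (n + 3)) ≤ ((n:ℝ) + 1 + 2) * (P (n + 2)) ^ 2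
        have E5 : (2*(n:ℝ)+3) * ((n:ℝ)+3) * (((n:ℝ)+3) * (P (n+2))^2 - ((n:ℝ)+2) * (P (n+1) * P (n+3))) =
            (2*(n:ℝ)^2+8*(n:ℝ)+7) * (P (n+2))^2
              - ((n:ℝ)+1) * ((n:ℝ)+2) * (2*(n:ℝ)+5) * (P n * P (n+2))
              + (2*(n:ℝ)+3) * ((n:ℝ)+2)^2 * (P (n+1))^2 := by
          linear_combination (-(2*(n:ℝ)+3) * ((n:ℝ)+2) * P (n+1)) * R2 +
            ((n:ℝ)+2) * (2*(n:ℝ)+5) * P (n+2) * R1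
        have hsq : (P n * P (n+2))^2 ≤ (P (n+1))^2 * (P (n+2))^2 := by
          nlinarith [mul_nonneg (le_of_lt hp) (le_of_lt hr),
            mul_le_mul_of_nonneg_right hp_le_q (le_of_lt hr)]
        have hAB : 0 ≤ (P n * P (n+2) - (P (n+1))^2) *
            (((n:ℝ)+2) * (P (n+1))^2 - ((n:ℝ)+1) * (P n * P (n+2))) :=
          mul_nonneg (by linarith) (by linarith)
        have hq2 : (0:ℝ) < (P (n+1))^2 := by positivity
        have star : 0 ≤ (2*(n:ℝ)^2+8*(n:ℝ)+7) * (P (n+2))^2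
              - ((n:ℝ)+1) * ((n:ℝ)+2) * (2*(n:ℝ)+5) * (P n * P (n+2))
              + (2*(n:ℝ)+3) * ((n:ℝ)+2)^2 * (P (n+1))^2 := by
          have k1 : (0:ℝ) ≤ (4*(2*(n:ℝ)^4+17*(n:ℝ)^3+50*(n:ℝ)^2+63*(n:ℝ)+29)*(2*(n:ℝ)^2+8*(n:ℝ)+7))
              * ((P (n+1))^2*(P (n+2))^2 - (P n*P (n+2))^2) :=
            mul_nonneg (by positivity) (by linarith [hsq])
          have k2 : (0:ℝ) ≤ (4*(2*(n:ℝ)^4+17*(n:ℝ)^3+50*(n:ℝ)^2+63*(n:ℝ)+29)*(2*(n:ℝ)^3+15*(n:ℝ)^2+33*(n:ℝ)+22))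
              * ((P n*P (n+2) - (P (n+1))^2) * (((n:ℝ)+2)*(P (n+1))^2 - ((n:ℝ)+1)*(P n*P (n+2)))) :=
            mul_nonneg (by positivity) hAB
          have k3 : (0:ℝ) ≤ (2*(2*(n:ℝ)^4+17*(n:ℝ)^3+50*(n:ℝ)^2+63*(n:ℝ)+29)*(P n*P (n+2))
              - 2*(2*(n:ℝ)^4+19*(n:ℝ)^3+61*(n:ℝ)^2+81*(n:ℝ)+38)*(P (n+1))^2)^2 := sq_nonneg _
          have k4 : (0:ℝ) ≤ (720+2016*(n:ℝ)+2212*(n:ℝ)^2+1188*(n:ℝ)^3+312*(n:ℝ)^4+32*(n:ℝ)^5)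
              * ((P (n+1))^2)^2 := by positivity
          have k5 : (0:ℝ) < 4*(2*(n:ℝ)^4+17*(n:ℝ)^3+50*(n:ℝ)^2+63*(n:ℝ)+29) * (P (n+1))^2 := by
            positivity
          nlinarith [k1, k2, k3, k4, k5]
        have hc : (0:ℝ) < (2*(n:ℝ)+3) * ((n:ℝ)+3) := by nlinarith
        nlinarith [E5, star, hc]
  intro n hn
  obtain ⟨m, rfl⟩ : ∃ m, n = m + 1 := ⟨n - 1, by omega⟩
  obtain ⟨hp, hq, hpq, hA, hB⟩ := Q m
  have e1 : m + 1 - 1 = m := by omega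
  rw [e1]
  have hm : (0:ℝ) < (m : ℝ) + 1 := by positivity
  constructor
  · show (P (m + 1)) ^ 2 ≤ P m * P (m + 2)
    exact hA
  · show P m * P (m + 2) ≤ (1 + 1 / ((m + 1 : ℕ) : ℝ)) * (P (m + 1)) ^ 2
    have hc : ((m + 1 : ℕ) : ℝ) = (m : ℝ) + 1 := by push_cast; ring
    rw [hc, show (1 + 1 / ((m:ℝ) + 1)) * (P (m + 1)) ^ 2
        = (((m:ℝ) + 2) * (P (m + 1)) ^ 2) / ((m:ℝ) + 1) by field_simp; ring,
      le_div_iff₀ hm]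
    linarith [hB]
end

section
/- Let (a_n) be defined by a_1 = 1, a_2 = 3, and a_n = (n+2) a_{n-1} − (n−1) a_{n-2} for n ≥ 3 (the number of directed column-convex polyominoes of height n). Then n+1 ≤ a_n / a_{n-1} ≤ n+2 for all n ≥ 2, and the sequence is log-balanced: a_n^2 ≤ a_{n-1} a_{n+1} ≤ (1 + 1/n) a_n^2 for all n ≥ 2. -/
lemma polyomino_key (a : ℕ → ℝ)
    (h1 : a 1 = 1) (h2 : a 2 = 3)
    (hrec : ∀ n : ℕ, n ≥ 3 → a n = ((n : ℝ) + 2) * a (n - 1) - ((n : ℝ) - 1) * a (n - 2)) :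
    ∀ n : ℕ, n ≥ 2 → 0 < a (n - 1) ∧ ((n : ℝ) + 1) * a (n - 1) ≤ a n ∧
      a n ≤ ((n : ℝ) + 2) * a (n - 1) := by
  intro n hn
  induction n, hn using Nat.le_induction with
  | base => norm_num [h1, h2]
  | succ n hn ih =>
    obtain ⟨hb, hlo, hhi⟩ := ih
    have e1 : n + 1 - 1 = n := rfl
    have e2 : n + 1 - 2 = n - 1 := by omega
    have hr := hrec (n + 1) (by omega)
    rw [e1, e2] at hr
    push_cast at hr ⊢
    have hn1 : (2 : ℝ) ≤ (n : ℝ) := by exact_mod_cast hn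
    have han : 0 < a n := by nlinarith
    refine ⟨han, by nlinarith, by nlinarith⟩

theorem polyomino_log_balanced (a : ℕ → ℝ)
    (h1 : a 1 = 1) (h2 : a 2 = 3)
    (hrec : ∀ n : ℕ, n ≥ 3 → a n = ((n : ℝ) + 2) * a (n - 1) - ((n : ℝ) - 1) * a (n - 2)) :
    ∀ n : ℕ, n ≥ 2 → ((n : ℝ) + 1 ≤ a n / a (n - 1) ∧ a n / a (n - 1) ≤ (n : ℝ) + 2) ∧
      ((a n) ^ 2 ≤ a (n - 1) * a (n + 1) ∧
        a (n - 1) * a (n + 1) ≤ (1 + 1 / (n : ℝ)) * (a n) ^ 2) := by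
  intro n hn
  obtain ⟨hb, hlo, hhi⟩ := polyomino_key a h1 h2 hrec n hn
  have e1 : n + 1 - 1 = n := rfl
  have e2 : n + 1 - 2 = n - 1 := by omega
  have hr := hrec (n + 1) (by omega)
  rw [e1, e2] at hr
  push_cast at hr
  have hn1 : (2 : ℝ) ≤ (n : ℝ) := by exact_mod_cast hn
  have hnpos : (0 : ℝ) < (n : ℝ) := by linarith
  constructor
  · constructor
    · rw [le_div_iff₀ hb]; linarith
    · rw [div_le_iff₀ hb]; linarith
  · constructor
    · -- a n ^ 2 ≤ a (n-1) * a (n+1)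
      rw [hr]
      nlinarith [mul_nonneg (by linarith : (0:ℝ) ≤ a n - ((n:ℝ)+1) * a (n-1))
          (by linarith : (0:ℝ) ≤ ((n:ℝ)+2) * a (n-1) - a n), sq_nonneg (a (n-1)),
          mul_le_mul_of_nonneg_left hhi (le_of_lt hnpos), mul_pos hb hb]
    · rw [hr]
      have h1n : (1 : ℝ) + 1 / (n : ℝ) = ((n : ℝ) + 1) / (n : ℝ) := by field_simp
      rw [h1n, div_mul_eq_mul_div, le_div_iff₀ hnpos]
      nlinarith [mul_nonneg (by linarith : (0:ℝ) ≤ a n - ((n:ℝ)+1) * a (n-1))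
          (by nlinarith [mul_le_mul_of_nonneg_left hlo (by linarith : (0:ℝ) ≤ (n:ℝ)+1),
            mul_pos hnpos hb, mul_pos (mul_pos hnpos hnpos) hb] :
            (0:ℝ) ≤ ((n:ℝ)+1) * a n + (1 - (n:ℝ)) * a (n-1)),
          mul_pos hb hb]
end
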